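/- The 3-step nilpotent Lie algebra n_{2,1,2} is a contraction of sl(2,ℝ) × ℝ². -/
import Mathlib


open Filter Topology

/-- `bg₀` (a bracket on `W`) is a contraction of `bg` (a bracket on `V`). -/
def IsContractionOf {V W : Type*} [AddCommGroup V] [Module ℝ V]
    [AddCommGroup W] [Module ℝ W] [TopologicalSpace W]
    (bg : V → V → V) (bg₀ : W → W → W) : Prop :=
  ∃ I : Set ℝ, (𝓝[I \ {0}] (0 : ℝ)).NeBot ∧
    ∃ C : ℝ → (W ≃ₗ[ℝ] V), ∀ x y : W,
      Tendsto (fun r => (C r).symm (bg (C r x) (C r y))) (𝓝[I \ {0}] (0 : ℝ)) (𝓝 (bg₀ x y))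

/-- The bracket of `sl(2,ℝ) × ℝ²` on `Fin 5 → ℝ`: `[e₁,e₂] = e₁`, `[e₂,e₃] = e₃`,
`[e₁,e₃] = 2e₂`, with `e₄, e₅` central. -/
def sl2R2Bracket (x y : Fin 5 → ℝ) : Fin 5 → ℝ :=
  ![x 0 * y 1 - x 1 * y 0, 2 * (x 0 * y 2 - x 2 * y 0), x 1 * y 2 - x 2 * y 1, 0, 0]

/-- The bracket of the 3-step nilpotent Lie algebra `n_{2,1,2}` on `Fin 5 → ℝ`:
`[e₁,e₂] = e₃`, `[e₁,e₃] = e₄`, `[e₂,e₃] = e₅`. -/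
def n212Bracket (x y : Fin 5 → ℝ) : Fin 5 → ℝ :=
  ![0, 0, x 0 * y 1 - x 1 * y 0, x 0 * y 2 - x 2 * y 0, x 1 * y 2 - x 2 * y 1]

noncomputable def Cfwd (r : ℝ) : (Fin 5 → ℝ) →ₗ[ℝ] (Fin 5 → ℝ) where
  toFun x := ![r * x 0, 2 * r ^ 2 * x 2, r * x 1, x 3 - x 0 / (2 * r ^ 2), x 4 + x 1 / (2 * r ^ 2)]
  map_add' x y := by
    funext i
    fin_cases i <;> simp [Pi.add_apply] <;> ring
  map_smul' c x := by
    funext i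
    fin_cases i <;> simp [Pi.smul_apply, smul_eq_mul] <;> ring

noncomputable def Cbwd (r : ℝ) : (Fin 5 → ℝ) →ₗ[ℝ] (Fin 5 → ℝ) where
  toFun y := ![y 0 / r, y 2 / r, y 1 / (2 * r ^ 2), y 3 + y 0 / (2 * r ^ 3), y 4 - y 2 / (2 * r ^ 3)]
  map_add' x y := by
    funext i
    fin_cases i <;> simp [Pi.add_apply] <;> ring
  map_smul' c x := by
    funext i
    fin_cases i <;> simp [Pi.smul_apply, smul_eq_mul] <;> ring

noncomputable def Cequiv (r : ℝ) : (Fin 5 → ℝ) ≃ₗ[ℝ] (Fin 5 → ℝ) :=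
  if hr : r = 0 then LinearEquiv.refl ℝ _ else
    LinearEquiv.ofLinear (Cfwd r) (Cbwd r)
      (by
        apply LinearMap.ext; intro y; funext i
        fin_cases i <;> simp [Cfwd, Cbwd] <;> field_simp <;> ring)
      (by
        apply LinearMap.ext; intro x; funext i
        fin_cases i <;> simp [Cfwd, Cbwd] <;> field_simp <;> ring)

/-- The 3-step nilpotent Lie algebra `n_{2,1,2}` is a contraction of `sl(2,ℝ) × ℝ²`. -/
theorem n212_isContractionOf_sl2R2 : IsContractionOf sl2R2Bracket n212Bracket := by
  refine ⟨Set.univ, ?_, Cequiv, ?_⟩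
  · rw [show (Set.univ \ {0} : Set ℝ) = {(0:ℝ)}ᶜ by ext; simp]
    exact inferInstance
  · intro x y
    have hcong : ∀ r ∈ (Set.univ \ {0} : Set ℝ),
        (fun r => (Cequiv r).symm (sl2R2Bracket (Cequiv r x) (Cequiv r y))) r =
        ![2 * r ^ 2 * (x 0 * y 2 - x 2 * y 0), -(2 * r ^ 2) * (x 1 * y 2 - x 2 * y 1),
          x 0 * y 1 - x 1 * y 0, x 0 * y 2 - x 2 * y 0, x 1 * y 2 - x 2 * y 1] := by
      intro r hr
      have hr0 : r ≠ 0 := hr.2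
      simp only [Cequiv, dif_neg hr0, LinearEquiv.ofLinear_symm_apply, LinearEquiv.ofLinear_apply]
      funext i
      fin_cases i <;>
        simp [Cfwd, Cbwd, sl2R2Bracket] <;> field_simp <;> ring
    refine Tendsto.congr' (Filter.eventuallyEq_of_mem self_mem_nhdsWithin
      (fun r hr => (hcong r hr).symm)) ?_
    have hc : Continuous (fun r : ℝ =>
        (![2 * r ^ 2 * (x 0 * y 2 - x 2 * y 0), -(2 * r ^ 2) * (x 1 * y 2 - x 2 * y 1),
          x 0 * y 1 - x 1 * y 0, x 0 * y 2 - x 2 * y 0, x 1 * y 2 - x 2 * y 1] : Fin 5 → ℝ)) := by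
      apply continuous_pi
      intro i
      fin_cases i <;> simp <;> fun_prop
    refine (hc.tendsto' 0 _ ?_).mono_left nhdsWithin_le_nhds
    funext i
    fin_cases i <;> simp [n212Bracket]
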